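/- arXiv:0906.2373 — 2 statements merged into one kernel-verified Lean document; each statement's English description precedes it below -/
import Mathlib

section
/- Let G be a Lie group and let F be a bi-invariant distribution on G. If a, b : ℝ → G are smooth curves tangent to F (i.e. a'(t) ∈ F_{a(t)} and b'(t) ∈ F_{b(t)} for all t), then the pointwise product curve c(t) = a(t)b(t) is tangent to F, i.e. c'(t) ∈ F_{c(t)} for all t. -/
/-!
By the product rule, `c'(t) = dR_{b(t)}(a'(t)) + dL_{a(t)}(b'(t))`. Invariance of `F` means that
`dL_x(y)` maps `F_y` into `F_{xy}`: composing with `dL_y(1)`, which maps `F_1` onto `F_y`, gives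
`dL_{xy}(1)`, which maps `F_1` onto `F_{xy}`. Likewise `dR_y(x)` maps `F_x` into `F_{xy}`, so
both summands, and hence `c'(t)`, lie in `F_{a(t)b(t)}`.
-/

open scoped Manifold

section ContMDiffMul

variable {𝕜 : Type*} [NontriviallyNormedField 𝕜]
  {E : Type*} [NormedAddCommGroup E] [NormedSpace 𝕜 E]
  {H : Type*} [TopologicalSpace H] {I : ModelWithCorners 𝕜 E H}
  {G : Type*} [TopologicalSpace G] [ChartedSpace H G]

section Translation

variable [Monoid G] [ContMDiffMul I 1 G] {F : ∀ g : G, Submodule 𝕜 (TangentSpace I g)}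

theorem mfderiv_mul_left_mem
    (hF : ∀ g : G, F g = (F 1).map (mfderiv I I (fun x : G => g * x) 1).toLinearMap)
    (x y : G) {w : TangentSpace I y} (hw : w ∈ F y) :
    mfderiv I I (fun z : G => x * z) y w ∈ F (x * y) := by
  rw [hF y] at hw
  obtain ⟨u, hu, rfl⟩ := hw
  rw [hF (x * y)]
  refine ⟨u, hu, ?_⟩
  have hcomp : (fun z : G => x * y * z) = (fun z : G => x * z) ∘ fun z : G => y * z :=
    funext fun z => mul_assoc x y z
  rw [hcomp]
  exact mfderiv_comp_apply_of_eq 1 mdifferentiableAt_mul_left mdifferentiableAt_mul_left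
    (mul_one y) u

theorem mfderiv_mul_right_mem
    (hF : ∀ g : G, F g = (F 1).map (mfderiv I I (fun x : G => x * g) 1).toLinearMap)
    (x y : G) {w : TangentSpace I x} (hw : w ∈ F x) :
    mfderiv I I (fun z : G => z * y) x w ∈ F (x * y) := by
  rw [hF x] at hw
  obtain ⟨u, hu, rfl⟩ := hw
  rw [hF (x * y)]
  refine ⟨u, hu, ?_⟩
  have hcomp : (fun z : G => z * (x * y)) = (fun z : G => z * y) ∘ fun z : G => z * x :=
    funext fun z => (mul_assoc z x y).symm
  rw [hcomp]
  exact mfderiv_comp_apply_of_eq 1 mdifferentiableAt_mul_right mdifferentiableAt_mul_right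
    (one_mul x) u

end Translation

theorem mfderiv_mul_apply [Mul G] [ContMDiffMul I 1 G]
    {E' : Type*} [NormedAddCommGroup E'] [NormedSpace 𝕜 E']
    {H' : Type*} [TopologicalSpace H'] {I' : ModelWithCorners 𝕜 E' H'}
    {M : Type*} [TopologicalSpace M] [ChartedSpace H' M]
    {f g : M → G} {x : M} (hf : MDifferentiableAt I' I f x) (hg : MDifferentiableAt I' I g x)
    (v : TangentSpace I' x) :
    mfderiv I' I (fun y => f y * g y) x v =
      mfderiv I I (fun z : G => z * g x) (f x) (mfderiv I' I f x v) +
      mfderiv I I (fun z : G => f x * z) (g x) (mfderiv I' I g x v) := by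
  have hmul : MDifferentiableAt (I.prod I) I (fun p : G × G => p.1 * p.2) (f x, g x) :=
    (contMDiff_mul I 1).mdifferentiableAt one_ne_zero
  have hpair : mfderiv I' (I.prod I) (fun y => (f y, g y)) x v =
      (mfderiv I' I f x v, mfderiv I' I g x v) := by
    rw [hf.mfderiv_prod hg]; rfl
  rw [← Function.comp_def (fun p : G × G => p.1 * p.2) (fun y => (f y, g y)),
    mfderiv_comp_apply x hmul (hf.prodMk hg), hpair]
  exact mfderiv_prod_eq_add_apply hmul

end ContMDiffMul

/-- If `a, b` are smooth curves tangent to a bi-invariant distribution `F`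
on a Lie group, then the pointwise product curve `t ↦ a t * b t` is tangent to `F`. -/
theorem product_of_tangent_curves_is_tangent
    {E : Type*} [NormedAddCommGroup E] [NormedSpace ℝ E]
    {H : Type*} [TopologicalSpace H] {I : ModelWithCorners ℝ E H}
    {G : Type*} [TopologicalSpace G] [ChartedSpace H G] [Group G] [LieGroup I (⊤ : ℕ∞) G]
    (F : ∀ g : G, Submodule ℝ (TangentSpace I g))
    (hbi : ∀ g : G,
      F g = (F 1).map (mfderiv I I (fun x : G => g * x) 1).toLinearMap ∧
      F g = (F 1).map (mfderiv I I (fun x : G => x * g) 1).toLinearMap)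
    (a b : ℝ → G) (ha : ContMDiff 𝓘(ℝ, ℝ) I (⊤ : ℕ∞) a) (hb : ContMDiff 𝓘(ℝ, ℝ) I (⊤ : ℕ∞) b)
    (hta : ∀ t : ℝ, mfderiv 𝓘(ℝ, ℝ) I a t (1 : ℝ)  ∈ F (a t))
    (htb : ∀ t : ℝ, mfderiv 𝓘(ℝ, ℝ) I b t (1 : ℝ)  ∈ F (b t)) :
    ∀ t : ℝ, mfderiv 𝓘(ℝ, ℝ) I (fun s : ℝ => a s * b s) t (1 : ℝ) ∈ F (a t * b t) := by
  intro t
  rw [mfderiv_mul_apply ((ha t).mdifferentiableAt (by simp)) ((hb t).mdifferentiableAt (by simp))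
    (1 : ℝ)]
  exact (F (a t * b t)).add_mem
    (mfderiv_mul_right_mem (fun g => (hbi g).2) (a t) (b t) (hta t))
    (mfderiv_mul_left_mem (fun g => (hbi g).1) (a t) (b t) (htb t))
end

section
/- Let G be a Lie group and let F be a bi-invariant distribution on G. If a : ℝ → G is a smooth curve tangent to F (i.e. a'(t) ∈ F_{a(t)} for all t), then the pointwise inverse curve t ↦ a(t)⁻¹ is tangent to F, i.e. its velocity at each t lies in F_{a(t)⁻¹}. -/
open scoped Manifold

/-!
Differentiating `a t * (a t)⁻¹ = 1` gives `dL_{a t} ((a⁻¹)' t) = - dR_{(a t)⁻¹} (a' t)`. Writing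
`a' t = dR_{a t} v` with `v ∈ F 1`, the right-hand side is `-v`, so `(a⁻¹)' t = dL_{(a t)⁻¹} (-v)`,
which lies in `F (a t)⁻¹` by left invariance.
-/

section LeftInverse

variable {𝕜 : Type*} [NontriviallyNormedField 𝕜]
  {E : Type*} [NormedAddCommGroup E] [NormedSpace 𝕜 E] {H : Type*} [TopologicalSpace H]
  {I : ModelWithCorners 𝕜 E H} {M : Type*} [TopologicalSpace M] [ChartedSpace H M]
  {E' : Type*} [NormedAddCommGroup E'] [NormedSpace 𝕜 E'] {H' : Type*} [TopologicalSpace H']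
  {I' : ModelWithCorners 𝕜 E' H'} {M' : Type*} [TopologicalSpace M'] [ChartedSpace H' M']

theorem mfderiv_apply_mfderiv_of_leftInverse {f : M → M'} {g : M' → M}
    (hgf : Function.LeftInverse g f) {x : M} {y : M'} (hg : MDifferentiableAt I' I g y)
    (hf : MDifferentiableAt I I' f x) (hy : f x = y) (v : TangentSpace I x) :
    mfderiv I' I g y (mfderiv I I' f x v) = v := by
  rw [← mfderiv_comp_apply_of_eq (x := x) hg hf hy, hgf.comp_eq_id, mfderiv_id]
  rfl

end LeftInverse

section LieGroup

variable {𝕜 : Type*} [NontriviallyNormedField 𝕜]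
  {E : Type*} [NormedAddCommGroup E] [NormedSpace 𝕜 E] {H : Type*} [TopologicalSpace H]
  {I : ModelWithCorners 𝕜 E H} {G : Type*} [TopologicalSpace G] [ChartedSpace H G] [Group G]
  {E' : Type*} [NormedAddCommGroup E'] [NormedSpace 𝕜 E'] {H' : Type*} [TopologicalSpace H']
  {I' : ModelWithCorners 𝕜 E' H'} {M : Type*} [TopologicalSpace M] [ChartedSpace H' M]

section Mul

variable [ContMDiffMul I 1 G]

theorem mfderiv_mul_left_inv_apply_mfderiv_mul_left {g h k : G} (hk : g * h = k)
    (v : TangentSpace I h) :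
    mfderiv I I (g⁻¹ * ·) k (mfderiv I I (g * ·) h v) = v :=
  mfderiv_apply_mfderiv_of_leftInverse (fun x ↦ inv_mul_cancel_left g x)
    mdifferentiableAt_mul_left mdifferentiableAt_mul_left hk v

theorem mfderiv_mul_right_inv_apply_mfderiv_mul_right {g h k : G} (hk : h * g = k)
    (v : TangentSpace I h) :
    mfderiv I I (· * g⁻¹) k (mfderiv I I (· * g) h v) = v :=
  mfderiv_apply_mfderiv_of_leftInverse (fun x ↦ mul_inv_cancel_right x g)
    mdifferentiableAt_mul_right mdifferentiableAt_mul_right hk v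

theorem mfderiv_mul_apply_s4 {f₁ f₂ : M → G} {x : M} (hf₁ : MDifferentiableAt I' I f₁ x)
    (hf₂ : MDifferentiableAt I' I f₂ x) (v : TangentSpace I' x) :
    mfderiv I' I (fun y ↦ f₁ y * f₂ y) x v =
      mfderiv I I (· * f₂ x) (f₁ x) (mfderiv I' I f₁ x v) +
        mfderiv I I (f₁ x * ·) (f₂ x) (mfderiv I' I f₂ x v) := by
  have hmul : MDifferentiableAt (I.prod I) I (fun p : G × G ↦ p.1 * p.2) (f₁ x, f₂ x) :=
    (contMDiff_mul I 1).mdifferentiableAt one_ne_zero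
  rw [show (fun y ↦ f₁ y * f₂ y) = (fun p : G × G ↦ p.1 * p.2) ∘ fun y ↦ (f₁ y, f₂ y) from rfl,
    mfderiv_comp_apply x hmul (hf₁.prodMk hf₂), mfderiv_prod_eq_add_apply hmul,
    hf₁.mfderiv_prod hf₂]
  rfl

end Mul

variable [LieGroup I 1 G]

theorem MDifferentiableAt.inv_of_lieGroup {f : M → G} {x : M}
    (hf : MDifferentiableAt I' I f x) :
    MDifferentiableAt I' I (fun y ↦ (f y)⁻¹) x :=
  ((contMDiff_inv I 1).mdifferentiable one_ne_zero _).comp x hf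

theorem mfderiv_mul_left_apply_mfderiv_inv {f : M → G} {x : M} (hf : MDifferentiableAt I' I f x)
    (v : TangentSpace I' x) :
    mfderiv I I (f x * ·) (f x)⁻¹ (mfderiv I' I (fun y ↦ (f y)⁻¹) x v) =
      -mfderiv I I (· * (f x)⁻¹) (f x) (mfderiv I' I f x v) := by
  have hprod := mfderiv_mul_apply_s4 hf hf.inv_of_lieGroup v
  rw [show (fun y ↦ f y * (f y)⁻¹) = fun _ ↦ 1 from funext fun y ↦ mul_inv_cancel (f y),
    mfderiv_const] at hprod
  exact eq_neg_of_add_eq_zero_right hprod.symm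

end LieGroup

/-- If `a` is a smooth curve tangent to a bi-invariant distribution `F`
on a Lie group, then the pointwise inverse curve `t ↦ (a t)⁻¹` is tangent to `F`. -/
theorem inverse_of_tangent_curve_is_tangent
    {E : Type*} [NormedAddCommGroup E] [NormedSpace ℝ E]
    {H : Type*} [TopologicalSpace H] {I : ModelWithCorners ℝ E H}
    {G : Type*} [TopologicalSpace G] [ChartedSpace H G] [Group G] [LieGroup I (⊤ : ℕ∞) G]
    (F : ∀ g : G, Submodule ℝ (TangentSpace I g))
    (hbi : ∀ g : G,
      F g = (F 1).map (mfderiv I I (fun x : G => g * x) 1 : TangentSpace I (1 : G) →ₗ[ℝ] TangentSpace I (g * 1)) ∧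
      F g = (F 1).map (mfderiv I I (fun x : G => x * g) 1 : TangentSpace I (1 : G) →ₗ[ℝ] TangentSpace I (1 * g)))
    (a : ℝ → G) (ha : ContMDiff 𝓘(ℝ, ℝ) I (⊤ : ℕ∞) a)
    (hta : ∀ t : ℝ, mfderiv 𝓘(ℝ, ℝ) I a t (1 : ℝ) ∈ F (a t)) :
    ∀ t : ℝ, mfderiv 𝓘(ℝ, ℝ) I (fun s : ℝ => (a s)⁻¹) t (1 : ℝ) ∈ F ((a t)⁻¹) := by
  intro t
  obtain ⟨v, hv, hva⟩ : mfderiv 𝓘(ℝ, ℝ) I a t (1 : ℝ) ∈ (F 1).map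
      (mfderiv I I (· * a t) 1 : TangentSpace I (1 : G) →ₗ[ℝ] TangentSpace I (1 * a t)) :=
    (hbi (a t)).2 ▸ hta t
  have hda : MDifferentiableAt 𝓘(ℝ, ℝ) I a t := ha.mdifferentiableAt (by simp)
  have hinv : -v = mfderiv I I (a t * ·) (a t)⁻¹
      (mfderiv 𝓘(ℝ, ℝ) I (fun s ↦ (a s)⁻¹) t (1 : ℝ)) := by
    refine Eq.symm ((mfderiv_mul_left_apply_mfderiv_inv hda _).trans ?_)
    rw [← hva]
    exact congrArg Neg.neg (mfderiv_mul_right_inv_apply_mfderiv_mul_right (one_mul (a t)) v)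
  rw [(hbi (a t)⁻¹).1]
  refine ⟨-v, neg_mem hv, ?_⟩
  rw [hinv]
  exact mfderiv_mul_left_inv_apply_mfderiv_mul_left (mul_inv_cancel (a t)) _
end
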